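/- Let n ≥ 3 be odd and let D_{−1} be the automorphism of the Heisenberg group H_g(n) given by (t,x,x^*) ↦ (t,−x,−x^*). Then the centralizer of D_{−1} in A(H_g(n)) intersects the kernel (Z/nZ)^{2g} of the map G : A(H_g(n)) → Sp(2g,Z/nZ) trivially, and G restricts to an isomorphism from this centralizer onto Sp(2g, Z/nZ). Consequently A(H_g(n)) ≅ Sp(2g, Z/nZ) ⋉ (Z/nZ)^{2g}. -/
import Mathlib


/-- The group `(ℤ/n)^g × ((ℤ/n)^g)^∨` underlying the Heisenberg group, the dual being
identified with `(ℤ/n)^g` via the standard pairing. -/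
abbrev HeisVec (g n : ℕ) := (Fin g → ZMod n) × (Fin g → ZMod n)

/-- The evaluation pairing `x^*(x) = ∑ᵢ x^*ᵢ xᵢ`. -/
def pairEval {g n : ℕ} (xstar x : Fin g → ZMod n) : ZMod n := ∑ i, xstar i * x i

/-- The standard symplectic form `E((x,x^*),(y,y^*)) = x^*(y) − y^*(x)` on `(ℤ/n)^{2g}`. -/
def stdE {g n : ℕ} (u v : HeisVec g n) : ZMod n := pairEval u.2 v.1 - pairEval v.2 u.1

/-- `ω^c` for an exponent `c : ℤ/n` and a root of unity `ω`. -/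
def rootPow (n : ℕ) (ω : ℂˣ) (c : ZMod n) : ℂˣ := ω ^ c.val

/-- The underlying set `ℂ^* × (ℤ/n)^g × ((ℤ/n)^g)^∨` of the Heisenberg group `H_g(n)`. -/
abbrev Heis (g n : ℕ) := ℂˣ × HeisVec g n

/-- The Heisenberg multiplication `(t,x,x^*)·(s,y,y^*) = (st·ω^{y^*(x)}, x+y, x^*+y^*)`. -/
def heisMul (g n : ℕ) (ω : ℂˣ) (a b : Heis g n) : Heis g n :=
  (a.1 * b.1 * rootPow n ω (pairEval b.2.2 a.2.1), a.2 + b.2)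

/-- `φ` belongs to `A(H_g(n))`: it is an automorphism of the Heisenberg group
(a multiplicative bijection) fixing the center `ℂ^*` pointwise. -/
def IsHeisAut (g n : ℕ) (ω : ℂˣ) (φ : Heis g n → Heis g n) : Prop :=
  Function.Bijective φ ∧
  (∀ a b, φ (heisMul g n ω a b) = heisMul g n ω (φ a) (φ b)) ∧
  (∀ t : ℂˣ, φ (t, 0) = (t, 0))

/-- The automorphism `ζ_a : (t,x,x^*) ↦ (t·ω^{E((x,x^*),a)}, x, x^*)` of `H_g(n)`. -/
def zetaAut (g n : ℕ) (ω : ℂˣ) (a : HeisVec g n) (h : Heis g n) : Heis g n :=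
  (h.1 * rootPow n ω (stdE h.2 a), h.2)

/-- The automorphism `D_{−1} : (t,x,x^*) ↦ (t,−x,−x^*)` of the Heisenberg group. -/
def heisDminusOne (g n : ℕ) (h : Heis g n) : Heis g n := (h.1, -h.2)

namespace HeisAux9

variable {g n : ℕ} {ω : ℂˣ}

lemma pairEval_add_left (x y z : Fin g → ZMod n) :
    pairEval (x + y) z = pairEval x z + pairEval y z := by
  simp [pairEval, add_mul, Finset.sum_add_distrib]

lemma pairEval_add_right (x y z : Fin g → ZMod n) :
    pairEval x (y + z) = pairEval x y + pairEval x z := by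
  simp [pairEval, mul_add, Finset.sum_add_distrib]

lemma pairEval_zero_left (x : Fin g → ZMod n) : pairEval 0 x = 0 := by simp [pairEval]
lemma pairEval_zero_right (x : Fin g → ZMod n) : pairEval x 0 = 0 := by simp [pairEval]

lemma pairEval_neg_left (x z : Fin g → ZMod n) : pairEval (-x) z = -pairEval x z := by
  simp [pairEval]

lemma pairEval_neg_right (x z : Fin g → ZMod n) : pairEval x (-z) = -pairEval x z := by
  simp [pairEval]

lemma pairEval_single_right (x : Fin g → ZMod n) (i : Fin g) :
    pairEval x (Pi.single i 1) = x i := by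
  simp [pairEval, Pi.single_apply]

lemma pairEval_single_left (x : Fin g → ZMod n) (i : Fin g) :
    pairEval (Pi.single i 1) x = x i := by
  simp [pairEval, Pi.single_apply]

lemma rootPow_add [NeZero n] (hω : orderOf ω = n) (c d : ZMod n) :
    rootPow n ω (c + d) = rootPow n ω c * rootPow n ω d := by
  have h := pow_mod_orderOf ω (c.val + d.val)
  rw [hω] at h
  unfold rootPow
  rw [ZMod.val_add, h, pow_add]

lemma rootPow_zero [NeZero n] : rootPow n ω (0 : ZMod n) = 1 := by
  simp [rootPow]

lemma rootPow_inj [NeZero n] (hω : orderOf ω = n) :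
    Function.Injective (rootPow n ω) := by
  intro c d h
  unfold rootPow at h
  rw [pow_eq_pow_iff_modEq, hω, Nat.ModEq,
    Nat.mod_eq_of_lt (ZMod.val_lt c), Nat.mod_eq_of_lt (ZMod.val_lt d)] at h
  have := congrArg (Nat.cast : ℕ → ZMod n) h
  simpa [ZMod.natCast_val, ZMod.cast_id] using this

lemma rootPow_neg [NeZero n] (hω : orderOf ω = n) (c : ZMod n) :
    rootPow n ω (-c) = (rootPow n ω c)⁻¹ := by
  have := rootPow_add hω (-c) c
  rw [neg_add_cancel, rootPow_zero] at this
  exact eq_inv_of_mul_eq_one_left this.symm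

lemma inv_two_mul_two [NeZero n] (hn : Odd n) : (2 : ZMod n)⁻¹ * 2 = 1 := by
  apply ZMod.inv_mul_of_unit
  have h : Nat.Coprime 2 n := Nat.coprime_two_left.mpr hn
  have := (ZMod.isUnit_iff_coprime 2 n).mpr h
  simpa using this


lemma map_zero_of_add {α : Type*} [AddGroup α] {f : HeisVec g n → α}
    (hadd : ∀ u v, f (u + v) = f u + f v) : f 0 = 0 := by
  have h := hadd 0 0
  rw [add_zero] at h
  have : f 0 + 0 = f 0 + f 0 := by simpa using h
  exact (add_left_cancel this).symm

lemma map_neg_of_add {α : Type*} [AddGroup α] {f : HeisVec g n → α}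
    (hadd : ∀ u v, f (u + v) = f u + f v) (v : HeisVec g n) : f (-v) = - f v := by
  have h := hadd v (-v)
  rw [add_neg_cancel, map_zero_of_add hadd] at h
  exact eq_neg_of_add_eq_zero_right h.symm

/-- `φ_M(v) = (1/2)(β(Mv,Mv) − β(v,v))`. -/
def phiM {g n : ℕ} (f : HeisVec g n → HeisVec g n) (v : HeisVec g n) : ZMod n :=
  (2 : ZMod n)⁻¹ * (pairEval (f v).2 (f v).1 - pairEval v.2 v.1)

lemma phiM_add [NeZero n] (hn : Odd n) {f : HeisVec g n → HeisVec g n}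
    (hadd : ∀ u v, f (u + v) = f u + f v)
    (hsp : ∀ u v, stdE (f u) (f v) = stdE u v) (u v : HeisVec g n) :
    phiM f (u + v) = phiM f u + phiM f v +
      (pairEval (f v).2 (f u).1 - pairEval v.2 u.1) := by
  have h2 := inv_two_mul_two (n := n) hn
  have hs := hsp u v
  unfold stdE at hs
  unfold phiM
  rw [hadd u v]
  simp only [Prod.fst_add, Prod.snd_add, pairEval_add_left, pairEval_add_right]
  linear_combination ((2:ZMod n)⁻¹) * hs +
    (pairEval (f v).2 (f u).1 - pairEval v.2 u.1) * h2

lemma phiM_zero {f : HeisVec g n → HeisVec g n} (h0 : f 0 = 0) : phiM f 0 = 0 := by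
  simp [phiM, h0, pairEval_zero_left]

lemma phiM_neg {f : HeisVec g n → HeisVec g n}
    (hadd : ∀ u v, f (u + v) = f u + f v) (v : HeisVec g n) : phiM f (-v) = phiM f v := by
  simp [phiM, map_neg_of_add hadd, pairEval_neg_left, pairEval_neg_right]

/-- The canonical lift of a symplectic map to the Heisenberg group. -/
def spLift (g n : ℕ) (ω : ℂˣ) (f : HeisVec g n → HeisVec g n) (h : Heis g n) : Heis g n :=
  (h.1 * rootPow n ω (phiM f h.2), f h.2)

lemma spLift_aut [NeZero n] (hn : Odd n) (hω : orderOf ω = n)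
    {f : HeisVec g n → HeisVec g n} (hbij : Function.Bijective f)
    (hadd : ∀ u v, f (u + v) = f u + f v)
    (hsp : ∀ u v, stdE (f u) (f v) = stdE u v) :
    IsHeisAut g n ω (spLift g n ω f) ∧
      (spLift g n ω f) ∘ (heisDminusOne g n) = (heisDminusOne g n) ∘ (spLift g n ω f) ∧
      (∀ h : Heis g n, (spLift g n ω f h).2 = f h.2) := by
  have h0 : f 0 = 0 := map_zero_of_add hadd
  refine ⟨⟨?_, ?_, ?_⟩, ?_, fun h => rfl⟩
  · constructor
    · intro a b hab
      have h2 : a.2 = b.2 := hbij.1 (congrArg Prod.snd hab)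
      have h1 := congrArg Prod.fst hab
      simp only [spLift, h2] at h1
      exact Prod.ext (mul_right_cancel h1) h2
    · rintro ⟨s, w⟩
      obtain ⟨v, hv⟩ := hbij.2 w
      exact ⟨(s * (rootPow n ω (phiM f v))⁻¹, v), by simp [spLift, hv]⟩
  · intro a b
    have key : rootPow n ω (pairEval b.2.2 a.2.1) * rootPow n ω (phiM f (a.2 + b.2)) =
        rootPow n ω (phiM f a.2) * rootPow n ω (phiM f b.2) *
          rootPow n ω (pairEval (f b.2).2 (f a.2).1) := by
      rw [← rootPow_add hω, ← rootPow_add hω, ← rootPow_add hω]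
      congr 1
      rw [phiM_add hn hadd hsp]
      ring
    apply Prod.ext
    · show a.1 * b.1 * rootPow n ω (pairEval b.2.2 a.2.1) * rootPow n ω (phiM f (a.2 + b.2)) =
        a.1 * rootPow n ω (phiM f a.2) * (b.1 * rootPow n ω (phiM f b.2)) *
          rootPow n ω (pairEval (f b.2).2 (f a.2).1)
      rw [mul_assoc, key]
      simp only [mul_comm, mul_left_comm, mul_assoc]
    · show f (a.2 + b.2) = f a.2 + f b.2
      exact hadd a.2 b.2
  · intro t
    simp [spLift, phiM_zero h0, rootPow_zero, h0]
  · funext h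
    apply Prod.ext
    · show h.1 * rootPow n ω (phiM f (-h.2)) = h.1 * rootPow n ω (phiM f h.2)
      rw [phiM_neg hadd]
    · show f (-h.2) = -(f h.2)
      exact map_neg_of_add hadd h.2


lemma cent_inj [NeZero n] (hn : Odd n) (hω : orderOf ω = n)
    {φ φ' : Heis g n → Heis g n} (hφ : IsHeisAut g n ω φ) (hφ' : IsHeisAut g n ω φ')
    (hc : φ ∘ heisDminusOne g n = heisDminusOne g n ∘ φ)
    (hc' : φ' ∘ heisDminusOne g n = heisDminusOne g n ∘ φ')
    (hsnd : ∀ h : Heis g n, (φ h).2 = (φ' h).2) : φ = φ' := by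
  obtain ⟨-, hmul, hcen⟩ := hφ
  obtain ⟨-, hmul', hcen'⟩ := hφ'
  have hkey : ∀ x y z w r : ℂˣ, x * y * r * (z * w * r)⁻¹ = x * z⁻¹ * (y * w⁻¹) := by
    intro x y z w r
    apply Units.ext
    simp only [Units.val_mul, Units.val_inv_eq_inv_val]
    field_simp
  set c : Heis g n → ℂˣ := fun h => (φ h).1 * ((φ' h).1)⁻¹ with hcdef
  have cmul : ∀ a b, c (heisMul g n ω a b) = c a * c b := by
    intro a b
    show (φ (heisMul g n ω a b)).1 * ((φ' (heisMul g n ω a b)).1)⁻¹ =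
      (φ a).1 * ((φ' a).1)⁻¹ * ((φ b).1 * ((φ' b).1)⁻¹)
    rw [hmul, hmul']
    simp only [heisMul, hsnd a, hsnd b]
    exact hkey _ _ _ _ _
  have ccen : ∀ t : ℂˣ, c ((t, 0) : Heis g n) = 1 := by
    intro t; simp [hcdef, hcen, hcen']
  have cD : ∀ h, c (heisDminusOne g n h) = c h := by
    intro h
    have h1 := congrFun hc h
    have h2 := congrFun hc' h
    simp only [Function.comp_apply] at h1 h2
    have e1 : (φ (heisDminusOne g n h)).1 = (φ h).1 := by rw [h1]; rfl
    have e2 : (φ' (heisDminusOne g n h)).1 = (φ' h).1 := by rw [h2]; rfl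
    show (φ (heisDminusOne g n h)).1 * ((φ' (heisDminusOne g n h)).1)⁻¹ = _
    rw [e1, e2]
  have hone : ∀ h, c h = 1 := by
    intro h
    have hsq : c h ^ 2 = 1 := by
      have e1 : heisMul g n ω h (heisDminusOne g n h)
          = ((h.1 * h.1 * rootPow n ω (pairEval (-h.2.2) h.2.1), 0) : Heis g n) := by
        simp [heisMul, heisDminusOne]
      have hmm := cmul h (heisDminusOne g n h)
      rw [e1, ccen, cD] at hmm
      rw [sq, ← hmm]
    have hpow : c h ^ n = 1 := by
      have key : ∀ k : ℕ, ∃ s : ℂˣ, c h ^ k = c ((s, k • h.2) : Heis g n) := by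
        intro k
        induction k with
        | zero => exact ⟨1, by rw [zero_smul, pow_zero, ccen]⟩
        | succ k ih =>
          obtain ⟨s, hs⟩ := ih
          refine ⟨s * h.1 * rootPow n ω (pairEval h.2.2 (k • h.2).1), ?_⟩
          rw [pow_succ, hs, ← cmul]
          congr 1
          apply Prod.ext
          · rfl
          · show (k • h.2) + h.2 = (k + 1) • h.2
            rw [succ_nsmul]
      obtain ⟨s, hs⟩ := key n
      have hz : n • h.2 = (0 : HeisVec g n) := by
        rw [← Nat.cast_smul_eq_nsmul (ZMod n) n h.2, ZMod.natCast_self, zero_smul]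
      rw [hs, hz, ccen]
    have hcop : Nat.Coprime 2 n := Nat.coprime_two_left.mpr hn
    have hd1 : orderOf (c h) ∣ 2 := orderOf_dvd_of_pow_eq_one hsq
    have hd2 : orderOf (c h) ∣ n := orderOf_dvd_of_pow_eq_one hpow
    have : orderOf (c h) ∣ 1 := hcop ▸ Nat.dvd_gcd hd1 hd2
    rw [Nat.dvd_one] at this
    exact orderOf_eq_one_iff.mp this
  funext h
  have h1 : (φ h).1 = (φ' h).1 := mul_inv_eq_one.mp (hone h)
  exact Prod.ext h1 (hsnd h)

lemma exists_rootPow_eq [NeZero n] (hω : orderOf ω = n) {ξ : ℂˣ} (hξ : ξ ^ n = 1) :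
    ∃ c : ZMod n, rootPow n ω c = ξ := by
  have hprim : IsPrimitiveRoot (ω : ℂ) n :=
    IsPrimitiveRoot.coe_units_iff.mpr (hω ▸ IsPrimitiveRoot.orderOf ω)
  have hξ' : (ξ : ℂ) ^ n = 1 := by
    rw [← Units.val_pow_eq_pow_val, hξ, Units.val_one]
  obtain ⟨i, hi, hpow⟩ := hprim.eq_pow_of_pow_eq_one hξ'
  refine ⟨(i : ZMod n), Units.ext ?_⟩
  have hv : ((i : ZMod n)).val = i := by rw [ZMod.val_natCast, Nat.mod_eq_of_lt hi]
  show ((ω ^ ((i : ZMod n)).val : ℂˣ) : ℂ) = ξ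
  rw [hv]
  push_cast
  exact hpow

lemma exists_stdE_rep [NeZero n] {μ : HeisVec g n → ZMod n}
    (hadd : ∀ u v, μ (u + v) = μ u + μ v) :
    ∃ a : HeisVec g n, ∀ w, stdE w a = μ w := by
  let N : HeisVec g n →+ ZMod n := AddMonoidHom.mk' μ hadd
  have hNdef : ∀ v, N v = μ v := fun v => rfl
  have hsmul : ∀ (cz : ZMod n) (v : HeisVec g n), μ (cz • v) = cz * μ v := by
    intro cz v
    have h1 : cz • v = (cz.val : ℕ) • v := by
      rw [← Nat.cast_smul_eq_nsmul (ZMod n) cz.val v, ZMod.natCast_val, ZMod.cast_id]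
    rw [h1, ← hNdef, map_nsmul N cz.val v, hNdef, nsmul_eq_mul,
      ZMod.natCast_val, ZMod.cast_id]
  have hsingle1 : ∀ (x : Fin g → ZMod n) (i : Fin g),
      ((Pi.single i (x i), 0) : HeisVec g n) = (x i) • ((Pi.single i 1, 0) : HeisVec g n) := by
    intro x i
    rw [Prod.smul_mk, smul_zero, ← Pi.single_smul, smul_eq_mul, mul_one]
  have hsingle2 : ∀ (x : Fin g → ZMod n) (i : Fin g),
      ((0, Pi.single i (x i)) : HeisVec g n) = (x i) • ((0, Pi.single i 1) : HeisVec g n) := by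
    intro x i
    rw [Prod.smul_mk, smul_zero, ← Pi.single_smul, smul_eq_mul, mul_one]
  have hx : ∀ x : Fin g → ZMod n, μ (x, 0) = ∑ i, x i * μ (Pi.single i 1, 0) := by
    intro x
    have hx1 : ((x, 0) : HeisVec g n) = ∑ i, ((Pi.single i (x i), 0) : HeisVec g n) := by
      apply Prod.ext
      · rw [Prod.fst_sum]; simp [Finset.univ_sum_single]
      · rw [Prod.snd_sum]; simp
    rw [hx1, ← hNdef, map_sum]
    exact Finset.sum_congr rfl fun i _ => by rw [hNdef, hsingle1 x i, hsmul]
  have hxs : ∀ x : Fin g → ZMod n, μ (0, x) = ∑ i, x i * μ (0, Pi.single i 1) := by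
    intro x
    have hx1 : ((0, x) : HeisVec g n) = ∑ i, ((0, Pi.single i (x i)) : HeisVec g n) := by
      apply Prod.ext
      · rw [Prod.fst_sum]; simp
      · rw [Prod.snd_sum]; simp [Finset.univ_sum_single]
    rw [hx1, ← hNdef, map_sum]
    exact Finset.sum_congr rfl fun i _ => by rw [hNdef, hsingle2 x i, hsmul]
  refine ⟨(fun i => μ (0, Pi.single i 1), fun i => - μ (Pi.single i 1, 0)), fun w => ?_⟩
  have hw : μ w = μ (w.1, 0) + μ (0, w.2) := by
    rw [← hadd]
    congr 1
    apply Prod.ext <;> simp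
  rw [hw, hx w.1, hxs w.2]
  simp only [stdE, pairEval]
  have e2 : ∑ i, (-μ (Pi.single i 1, 0)) * w.1 i
      = - ∑ i, w.1 i * μ (Pi.single i 1, 0) := by
    rw [← Finset.sum_neg_distrib]
    exact Finset.sum_congr rfl fun i _ => by ring
  rw [e2]
  ring

lemma aut_apply {φ : Heis g n → Heis g n} (hφ : IsHeisAut g n ω φ) (t : ℂˣ)
    (v : HeisVec g n) : φ (t, v) = (t * (φ (1, v)).1, (φ (1, v)).2) := by
  obtain ⟨-, hmul, hcen⟩ := hφ
  have e : heisMul g n ω (t, 0) (1, v) = (t, v) := by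
    simp [heisMul, pairEval, rootPow]
  calc φ (t, v) = φ (heisMul g n ω (t, 0) (1, v)) := by rw [e]
    _ = heisMul g n ω (t, 0) (φ (1, v)) := by rw [hmul, hcen]
    _ = (t * (φ (1, v)).1, (φ (1, v)).2) := by
        simp [heisMul, pairEval, rootPow]

end HeisAux9

open HeisAux9 in
/-- Let `n ≥ 3` be odd and `D_{−1} : (t,x,x^*) ↦ (t,−x,−x^*)`.  The
centralizer of `D_{−1}` in `A(H_g(n))` meets the kernel `(ℤ/n)^{2g}` (the image of
`a ↦ ζ_a`) of `G : A(H_g(n)) → Sp(2g,ℤ/n)` trivially, and `G` restricts to an isomorphism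
from this centralizer onto `Sp(2g,ℤ/n)`: on the centralizer `G` is injective and onto the
symplectic automorphisms of `(ℤ/n)^{2g}`.  Consequently
`A(H_g(n)) ≅ Sp(2g,ℤ/n) ⋉ (ℤ/n)^{2g}`: every `φ ∈ A(H_g(n))` factors uniquely as
`φ = ζ_a ∘ c` with `c` in the centralizer of `D_{−1}`. -/
theorem heisenberg_centralizer_of_Dminus_one
    (g n : ℕ) (hg : 1 ≤ g) (hn : Odd n) (hn3 : 3 ≤ n)
    (ω : ℂˣ) (hω : orderOf ω = n) :
    -- the centralizer meets the image of `a ↦ ζ_a` trivially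
    (∀ a : HeisVec g n,
      (zetaAut g n ω a) ∘ (heisDminusOne g n) = (heisDminusOne g n) ∘ (zetaAut g n ω a) →
      zetaAut g n ω a = id) ∧
    -- `G` is injective on the centralizer: two elements of the centralizer inducing the
    -- same map on `(ℤ/n)^{2g}` agree
    (∀ φ φ' : Heis g n → Heis g n, IsHeisAut g n ω φ → IsHeisAut g n ω φ' →
      φ ∘ (heisDminusOne g n) = (heisDminusOne g n) ∘ φ →
      φ' ∘ (heisDminusOne g n) = (heisDminusOne g n) ∘ φ' →
      (∀ h : Heis g n, (φ h).2 = (φ' h).2) → φ = φ') ∧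
    -- `G` maps the centralizer onto `Sp(2g, ℤ/n)`
    (∀ f : HeisVec g n → HeisVec g n,
      Function.Bijective f → (∀ u v, f (u + v) = f u + f v) →
      (∀ u v, stdE (f u) (f v) = stdE u v) →
      ∃ φ : Heis g n → Heis g n, IsHeisAut g n ω φ ∧
        φ ∘ (heisDminusOne g n) = (heisDminusOne g n) ∘ φ ∧
        ∀ h : Heis g n, (φ h).2 = f h.2) ∧
    -- semidirect product decomposition: unique factorization `φ = ζ_a ∘ c`
    (∀ φ : Heis g n → Heis g n, IsHeisAut g n ω φ →
      ∃! p : HeisVec g n × (Heis g n → Heis g n),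
        IsHeisAut g n ω p.2 ∧
        p.2 ∘ (heisDminusOne g n) = (heisDminusOne g n) ∘ p.2 ∧
        φ = (zetaAut g n ω p.1) ∘ p.2) := by
  haveI : NeZero n := ⟨by omega⟩
  have hunit : ∀ (t x r : ℂˣ), t * r * (x * r⁻¹) = t * x := by
    intro t x r
    apply Units.ext
    simp only [Units.val_mul, Units.val_inv_eq_inv_val]
    field_simp
  refine ⟨?_, fun φ φ' hφ hφ' hcφ hcφ' hsnd => cent_inj hn hω hφ hφ' hcφ hcφ' hsnd, ?_, ?_⟩
  · -- Part 1: trivial intersection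
    intro a hcomm
    funext h
    have hh := congrFun hcomm h
    simp only [Function.comp_apply] at hh
    have h1 : h.1 * rootPow n ω (stdE (-h.2) a) = h.1 * rootPow n ω (stdE h.2 a) :=
      congrArg Prod.fst hh
    have h3 : stdE (-h.2) a = stdE h.2 a := rootPow_inj hω (mul_left_cancel h1)
    have hneg : stdE (-h.2) a = - stdE h.2 a := by
      show pairEval (-h.2).2 a.1 - pairEval a.2 (-h.2).1 = _
      rw [Prod.snd_neg, Prod.fst_neg, pairEval_neg_left, pairEval_neg_right, stdE]
      ring
    rw [hneg] at h3
    have hz : stdE h.2 a = 0 := by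
      have h4 : (2 : ZMod n) * stdE h.2 a = 0 := by linear_combination - h3
      calc stdE h.2 a = ((2 : ZMod n)⁻¹ * 2) * stdE h.2 a := by
            rw [inv_two_mul_two hn, one_mul]
        _ = (2 : ZMod n)⁻¹ * ((2 : ZMod n) * stdE h.2 a) := by ring
        _ = 0 := by rw [h4, mul_zero]
    apply Prod.ext
    · show h.1 * rootPow n ω (stdE h.2 a) = h.1
      rw [hz, rootPow_zero, mul_one]
    · rfl
  · -- Part 3: surjectivity onto Sp
    intro f hbij hadd hsp
    obtain ⟨h1, h2, h3⟩ := spLift_aut hn hω hbij hadd hsp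
    exact ⟨spLift g n ω f, h1, h2, h3⟩
  · -- Part 4: unique factorization
    intro φ hφ
    set M : HeisVec g n → HeisVec g n := fun v => (φ (1, v)).2 with hM
    set χ : HeisVec g n → ℂˣ := fun v => (φ (1, v)).1 with hχ
    have happly : ∀ (t : ℂˣ) v, φ (t, v) = (t * χ v, M v) := fun t v => aut_apply hφ t v
    have hφ10 : φ (1, 0) = (1, 0) := hφ.2.2 1
    have hχ0 : χ 0 = 1 := by rw [hχ]; simp [hφ10]
    have hM0 : M 0 = 0 := by rw [hM]; simp [hφ10]
    have hrel : ∀ u v, χ (u + v) * rootPow n ω (pairEval v.2 u.1)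
        = χ u * χ v * rootPow n ω (pairEval (M v).2 (M u).1) ∧ M (u + v) = M u + M v := by
      intro u v
      have e := hφ.2.1 (1, u) (1, v)
      have e1 : heisMul g n ω ((1 : ℂˣ), u) (1, v)
          = (rootPow n ω (pairEval v.2 u.1), u + v) := by
        simp [heisMul]
      rw [e1, happly] at e
      constructor
      · have h5 : rootPow n ω (pairEval v.2 u.1) * χ (u + v)
            = χ u * χ v * rootPow n ω (pairEval (M v).2 (M u).1) := congrArg Prod.fst e
        rw [mul_comm] at h5
        exact h5
      · exact congrArg Prod.snd e
    have Madd : ∀ u v, M (u + v) = M u + M v := fun u v => (hrel u v).2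
    have hMsp : ∀ u v, stdE (M u) (M v) = stdE u v := by
      intro u v
      have e1 := (hrel u v).1
      have e2 := (hrel v u).1
      have e3 : u + v = v + u := add_comm u v
      have e4 : χ u * χ v * rootPow n ω (pairEval (M v).2 (M u).1)
            * rootPow n ω (pairEval u.2 v.1)
          = χ v * χ u * rootPow n ω (pairEval (M u).2 (M v).1)
            * rootPow n ω (pairEval v.2 u.1) := by
        calc χ u * χ v * rootPow n ω (pairEval (M v).2 (M u).1)
              * rootPow n ω (pairEval u.2 v.1)
            = χ (u + v) * rootPow n ω (pairEval v.2 u.1)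
              * rootPow n ω (pairEval u.2 v.1) := by rw [e1]
          _ = χ (v + u) * rootPow n ω (pairEval u.2 v.1)
              * rootPow n ω (pairEval v.2 u.1) := by rw [e3, mul_right_comm]
          _ = _ := by rw [e2]
      rw [mul_comm (χ v) (χ u)] at e4
      rw [mul_assoc (χ u * χ v) (rootPow n ω (pairEval (M v).2 (M u).1)),
        mul_assoc (χ u * χ v) (rootPow n ω (pairEval (M u).2 (M v).1))] at e4
      have e5 := mul_left_cancel e4
      have e6 : pairEval (M v).2 (M u).1 + pairEval u.2 v.1
          = pairEval (M u).2 (M v).1 + pairEval v.2 u.1 := by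
        apply rootPow_inj hω
        rw [rootPow_add hω, rootPow_add hω]
        exact e5
      show pairEval (M u).2 (M v).1 - pairEval (M v).2 (M u).1
          = pairEval u.2 v.1 - pairEval v.2 u.1
      linear_combination - e6
    have hMinj : Function.Injective M := by
      intro u v huv
      have h7 : φ ((χ u) * (χ v)⁻¹, v) = φ (1, u) := by
        rw [happly, happly]
        apply Prod.ext
        · show χ u * (χ v)⁻¹ * χ v = 1 * χ u
          rw [inv_mul_cancel_right, one_mul]
        · exact huv.symm
      have h8 := hφ.1.1 h7
      exact (congrArg Prod.snd h8).symm
    have hMsurj : Function.Surjective M := by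
      intro w
      obtain ⟨⟨t, v⟩, hv⟩ := hφ.1.2 ((1 : ℂˣ), w)
      rw [happly] at hv
      exact ⟨v, congrArg Prod.snd hv⟩
    have hMbij : Function.Bijective M := ⟨hMinj, hMsurj⟩
    -- the quotient character ψ
    set ψ : HeisVec g n → ℂˣ := fun v => χ v * (rootPow n ω (phiM M v))⁻¹ with hψ
    have hgen : ∀ a x y rb rA ru rv rphi : ℂˣ, a * rb = x * y * rA →
        rA * (ru * rv) = rphi * rb → a * rphi⁻¹ = x * ru⁻¹ * (y * rv⁻¹) := by
      intro a x y rb rA ru rv rphi h1 h2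
      have h4 : a * (ru * rv) * rb = x * y * rphi * rb := by
        calc a * (ru * rv) * rb = (a * rb) * (ru * rv) := by rw [mul_right_comm]
          _ = x * y * rA * (ru * rv) := by rw [h1]
          _ = x * y * (rA * (ru * rv)) := by rw [mul_assoc]
          _ = x * y * (rphi * rb) := by rw [h2]
          _ = x * y * rphi * rb := by rw [← mul_assoc]
      have h3 := mul_right_cancel h4
      have h3' := congrArg Units.val h3
      apply Units.ext
      simp only [Units.val_mul, Units.val_inv_eq_inv_val] at h3' ⊢
      field_simp
      linear_combination h3'
    have hψmul : ∀ u v, ψ (u + v) = ψ u * ψ v := by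
      intro u v
      have hp := phiM_add hn Madd hMsp u v
      have hc := (hrel u v).1
      show χ (u + v) * (rootPow n ω (phiM M (u + v)))⁻¹
          = χ u * (rootPow n ω (phiM M u))⁻¹ * (χ v * (rootPow n ω (phiM M v))⁻¹)
      apply hgen _ _ _ _ _ _ _ _ hc
      rw [← rootPow_add hω, ← rootPow_add hω, ← rootPow_add hω]
      congr 1
      rw [hp]
      ring
    have hψ0 : ψ 0 = 1 := by
      show χ 0 * (rootPow n ω (phiM M 0))⁻¹ = 1
      rw [hχ0, phiM_zero hM0, rootPow_zero, inv_one, mul_one]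
    have hψn : ∀ v, ψ v ^ n = 1 := by
      have hpow : ∀ (k : ℕ) v, ψ (k • v) = ψ v ^ k := by
        intro k v
        induction k with
        | zero => rw [zero_smul, pow_zero, hψ0]
        | succ k ih => rw [succ_nsmul, hψmul, ih, pow_succ]
      intro v
      have hz : n • v = (0 : HeisVec g n) := by
        rw [← Nat.cast_smul_eq_nsmul (ZMod n) n v, ZMod.natCast_self, zero_smul]
      rw [← hpow, hz, hψ0]
    have hdlog : ∀ v : HeisVec g n, ∃ c : ZMod n, rootPow n ω c = ψ v :=
      fun v => exists_rootPow_eq hω (hψn v)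
    choose lam hlam using hdlog
    have hlamadd : ∀ u v, lam (u + v) = lam u + lam v := by
      intro u v
      apply rootPow_inj hω
      rw [hlam, rootPow_add hω, hlam, hlam, hψmul]
    set e : HeisVec g n ≃ HeisVec g n := Equiv.ofBijective M hMbij with he
    have hμadd : ∀ u v, lam (e.symm (u + v)) = lam (e.symm u) + lam (e.symm v) := by
      intro u v
      have h9 : e.symm (u + v) = e.symm u + e.symm v := by
        apply e.injective
        rw [Equiv.apply_symm_apply]
        show u + v = M (e.symm u + e.symm v)
        rw [Madd]
        show u + v = e (e.symm u) + e (e.symm v)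
        rw [Equiv.apply_symm_apply, Equiv.apply_symm_apply]
      rw [h9, hlamadd]
    obtain ⟨a, ha⟩ := exists_stdE_rep (μ := fun w => lam (e.symm w)) hμadd
    have ha' : ∀ v, stdE (M v) a = lam v := by
      intro v
      rw [ha (M v)]
      show lam (e.symm (e v)) = lam v
      rw [Equiv.symm_apply_apply]
    obtain ⟨hL1, hL2, hL3⟩ := spLift_aut hn hω hMbij Madd hMsp
    have hfact : φ = (zetaAut g n ω a) ∘ (spLift g n ω M) := by
      funext h
      show φ h = zetaAut g n ω a (spLift g n ω M h)
      have heta : φ h = φ (h.1, h.2) := rfl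
      rw [heta, happly]
      apply Prod.ext
      · show h.1 * χ h.2 = h.1 * rootPow n ω (phiM M h.2) * rootPow n ω (stdE (M h.2) a)
        rw [ha' h.2, hlam]
        show h.1 * χ h.2
            = h.1 * rootPow n ω (phiM M h.2) * (χ h.2 * (rootPow n ω (phiM M h.2))⁻¹)
        rw [hunit]
      · rfl
    refine ⟨(a, spLift g n ω M), ⟨hL1, hL2, hfact⟩, ?_⟩
    rintro ⟨a', c'⟩ ⟨hA', hC', hE'⟩
    have hsnd' : ∀ h, (c' h).2 = M h.2 := by
      intro h
      have h10 := congrFun hE' h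
      have h11 := congrArg Prod.snd h10
      have h12 : (φ h).2 = M h.2 := by
        rw [show φ h = φ (h.1, h.2) from rfl, happly]
      exact h11.symm.trans h12
    have hc'eq : c' = spLift g n ω M := by
      apply cent_inj hn hω hA' hL1 hC' hL2
      intro h
      rw [hsnd' h]
      exact (hL3 h).symm
    have hstd : ∀ w : HeisVec g n, stdE w a' = stdE w a := by
      intro w
      have h13 := congrFun hE' ((1 : ℂˣ), e.symm w)
      have h14 := congrFun hfact ((1 : ℂˣ), e.symm w)
      rw [hc'eq] at h13
      have h15 : zetaAut g n ω a' (spLift g n ω M ((1 : ℂˣ), e.symm w))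
          = zetaAut g n ω a (spLift g n ω M ((1 : ℂˣ), e.symm w)) :=
        h13.symm.trans h14
      have h16 : (spLift g n ω M ((1 : ℂˣ), e.symm w)).2 = w := by
        show M (e.symm w) = w
        exact e.apply_symm_apply w
      have h17 := congrArg Prod.fst h15
      have h18 : (spLift g n ω M ((1 : ℂˣ), e.symm w)).1
          * rootPow n ω (stdE (spLift g n ω M ((1 : ℂˣ), e.symm w)).2 a')
          = (spLift g n ω M ((1 : ℂˣ), e.symm w)).1
          * rootPow n ω (stdE (spLift g n ω M ((1 : ℂˣ), e.symm w)).2 a) := h17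
      rw [h16] at h18
      exact rootPow_inj hω (mul_left_cancel h18)
    have haa : a' = a := by
      apply Prod.ext
      · funext i
        have := hstd (0, Pi.single i 1)
        show a'.1 i = a.1 i
        simpa [stdE, pairEval_single_left, pairEval_zero_right] using this
      · funext i
        have := hstd (Pi.single i 1, 0)
        show a'.2 i = a.2 i
        have h19 : - a'.2 i = - a.2 i := by
          simpa [stdE, pairEval_single_right, pairEval_zero_left] using this
        exact neg_injective h19
    exact Prod.ext haa hc'eq
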